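/- Let E be a directed graph. For each vertex v ∈ E⁰, the image α(Z(v)) is a closed subset of {0,1}^{E*} (with the product topology), where α(w)(y) = 1 iff w extends y. Consequently Z(v) is compact in the initial topology on E* ∪ E^∞ induced by α. -/

import Mathlib

/-!
`α(Z(v))` consists exactly of the `f` with `f v = 1` whose support is closed under prefixes and
totally ordered by extension. Each of these conditions involves at most two coordinates, so the
set is closed. Conversely, such a support either has a longest path `λ`, and then `f = α(λ)`, or
contains paths of every length; these are all prefixes of one infinite path `x`, and `f = α(x)`.
Compactness of `Z(v)` follows because `α` is inducing and `{0,1}^{E*}` is compact.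
-/

structure DirectedGraph where
  V : Type
  E : Type
  r : E → V
  s : E → V

namespace DirectedGraph

variable {G : DirectedGraph}

/-- A finite path: a list of edges `μ₁ … μₙ` with `s μᵢ = r μᵢ₊₁`, together with its
range vertex (which is the range of the first edge when the path is nonempty, and is
the defining datum of the path when the path has length zero, i.e. is a vertex). -/
structure FinPath (G : DirectedGraph) where
  vtx : G.V
  edges : List G.E
  chain : edges.Chain' fun e f => G.s e = G.r f
  hv : ∀ e ∈ edges.head?, G.r e = vtx

/-- An infinite path `μ₁μ₂…` with `s μᵢ = r μᵢ₊₁`. -/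
structure InfPath (G : DirectedGraph) where
  edge : ℕ → G.E
  chain : ∀ n, G.s (edge n) = G.r (edge (n + 1))

/-- The path space `E* ∪ E^∞`. -/
abbrev PathSpace (G : DirectedGraph) := FinPath G ⊕ InfPath G

namespace FinPath

def length (μ : FinPath G) : ℕ := μ.edges.length

def range (μ : FinPath G) : G.V := μ.vtx

def source (μ : FinPath G) : G.V := (μ.edges.getLast?).elim μ.vtx G.s

/-- A vertex, regarded as a path of length zero. -/
def ofVertex (G : DirectedGraph) (v : G.V) : FinPath G :=
  ⟨v, [], List.isChain_nil, by simp⟩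

/-- `μ.Extends ν` means `μ = νν′` for some path `ν′`. -/
def Extends (μ ν : FinPath G) : Prop := μ.vtx = ν.vtx ∧ ν.edges <+: μ.edges

end FinPath

def InfPath.range (x : InfPath G) : G.V := G.r (x.edge 0)

/-- `x.Extends ν` means the infinite path `x` is of the form `νx′`. -/
def InfPath.Extends (x : InfPath G) (ν : FinPath G) : Prop :=
  (ν.edges = [] → x.range = ν.vtx) ∧
  ∀ i, (h : i < ν.edges.length) → x.edge i = ν.edges.get ⟨i, h⟩

/-- The cylinder set `Z(μ) = {w ∈ E* ∪ E^∞ : w = μw′}`. -/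
def Cyl (μ : FinPath G) : Set (PathSpace G) :=
  {w | match w with
       | Sum.inl lam => lam.Extends μ
       | Sum.inr x => x.Extends μ}

/-- The cylinder set `Z(μe)` of the path `μ` followed by the edge `e`. -/
def CylSnoc (μ : FinPath G) (e : G.E) : Set (PathSpace G) :=
  {w | match w with
       | Sum.inl lam => (μ.edges ++ [e]) <+: lam.edges
       | Sum.inr x => ∀ i, (h : i < (μ.edges ++ [e]).length) →
           x.edge i = (μ.edges ++ [e]).get ⟨i, h⟩}

/-- `Z(μ∖G) := Z(μ) ∖ ⋃_{e ∈ G} Z(μe)`. -/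
def CylMinus (μ : FinPath G) (GS : Finset G.E) : Set (PathSpace G) :=
  Cyl μ \ ⋃ e ∈ GS, CylSnoc μ e

/-- The basic sets `Z(μ∖G)` for `μ ∈ E*` and `G ⊆ s(μ)E¹` finite. -/
def basicSets (G : DirectedGraph) : Set (Set (PathSpace G)) :=
  {S | ∃ (μ : FinPath G) (GS : Finset G.E),
        (∀ e ∈ GS, G.r e = μ.source) ∧ S = CylMinus μ GS}

end DirectedGraph


namespace DirectedGraph

/-- The map w ↦ (indicator of {y : w ∈ Z(y)}) from the path space to {0,1}^{E*}. -/
noncomputable def alphaMap (G : DirectedGraph) : PathSpace G → (FinPath G → Bool) :=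
  fun w mu => @decide (w ∈ Cyl mu) (Classical.propDecidable _)

end DirectedGraph

namespace DirectedGraph

variable {G : DirectedGraph}

namespace FinPath

theorem ext {μ ν : FinPath G} (hv : μ.vtx = ν.vtx) (he : μ.edges = ν.edges) : μ = ν := by
  cases μ; cases ν; simp_all

theorem Extends.refl (μ : FinPath G) : μ.Extends μ := ⟨rfl, List.prefix_refl _⟩

theorem Extends.trans {μ ν ρ : FinPath G} (h₁ : μ.Extends ν) (h₂ : ν.Extends ρ) :
    μ.Extends ρ :=
  ⟨h₁.1.trans h₂.1, h₂.2.trans h₁.2⟩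

theorem Extends.eq_of_length_le {μ ν : FinPath G} (h : μ.Extends ν)
    (hl : μ.edges.length ≤ ν.edges.length) : μ = ν :=
  ext h.1 (h.2.eq_of_length (le_antisymm h.2.length_le hl)).symm

theorem r_getElem_zero (μ : FinPath G) (h : 0 < μ.edges.length) :
    G.r μ.edges[0] = μ.vtx := by
  obtain ⟨vtx, _ | ⟨e, l⟩, chain, hv⟩ := μ
  · simp at h
  · exact hv e rfl

end FinPath

namespace InfPath

theorem Extends.edge_eq {x : InfPath G} {μ : FinPath G} (h : x.Extends μ) {i : ℕ}
    (hi : i < μ.edges.length) : x.edge i = μ.edges[i] :=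
  h.2 i hi

theorem Extends.range_eq {x : InfPath G} {μ : FinPath G} (h : x.Extends μ) :
    x.range = μ.vtx := by
  rcases Nat.eq_zero_or_pos μ.edges.length with hμ | hμ
  · exact h.1 (List.length_eq_zero_iff.mp hμ)
  · rw [InfPath.range, h.edge_eq hμ, FinPath.r_getElem_zero]

theorem Extends.prefix_of_length_le {x : InfPath G} {μ ν : FinPath G} (hμ : x.Extends μ)
    (hν : x.Extends ν) (hl : ν.edges.length ≤ μ.edges.length) : ν.edges <+: μ.edges := by
  rw [List.prefix_iff_eq_take]
  refine List.ext_getElem (by simp [hl]) fun i hi _ => ?_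
  rw [List.getElem_take, ← hμ.edge_eq, ← hν.edge_eq]

theorem Extends.of_finPath_extends {x : InfPath G} {μ ν : FinPath G} (hμ : x.Extends μ)
    (hμν : μ.Extends ν) : x.Extends ν :=
  ⟨fun _ => hμ.range_eq.trans hμν.1, fun i hi => by
    rw [List.get_eq_getElem, hμ.edge_eq (hi.trans_le hμν.2.length_le), hμν.2.getElem hi]⟩

end InfPath

theorem mem_cyl_of_extends {w : PathSpace G} {μ ν : FinPath G} (hw : w ∈ Cyl μ)
    (hμν : μ.Extends ν) : w ∈ Cyl ν := by
  match w with
  | .inl lam => exact FinPath.Extends.trans hw hμν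
  | .inr x => exact InfPath.Extends.of_finPath_extends hw hμν

theorem extends_or_extends_of_mem_cyl {w : PathSpace G} {μ ν : FinPath G} (hμ : w ∈ Cyl μ)
    (hν : w ∈ Cyl ν) : μ.Extends ν ∨ ν.Extends μ := by
  match w with
  | .inl lam =>
    have hv : μ.vtx = ν.vtx := hμ.1.symm.trans hν.1
    exact (List.prefix_or_prefix_of_prefix hν.2 hμ.2).imp (⟨hv, ·⟩) (⟨hv.symm, ·⟩)
  | .inr x =>
    have hμ : x.Extends μ := hμ
    have hν : x.Extends ν := hν
    have hv : μ.vtx = ν.vtx := hμ.range_eq.symm.trans hν.range_eq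
    exact (le_total ν.edges.length μ.edges.length).imp
      (⟨hv, hμ.prefix_of_length_le hν ·⟩) (⟨hv.symm, hν.prefix_of_length_le hμ ·⟩)

theorem alphaMap_eq_true_iff {w : PathSpace G} {μ : FinPath G} :
    alphaMap G w μ = true ↔ w ∈ Cyl μ := by
  simp [alphaMap]

structure IsCylIndicator (v : G.V) (f : FinPath G → Bool) : Prop where
  apply_ofVertex : f (FinPath.ofVertex G v) = true
  apply_of_extends : ∀ μ ν, f μ = true → μ.Extends ν → f ν = true
  extends_or_extends : ∀ μ ν, f μ = true → f ν = true → μ.Extends ν ∨ ν.Extends μ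

theorem isClosed_setOf_apply_apply {ι : Type*} (p : Bool → Bool → Prop) (i j : ι) :
    IsClosed {f : ι → Bool | p (f i) (f j)} :=
  show IsClosed ((fun f : ι → Bool => (f i, f j)) ⁻¹' {q | p q.1 q.2}) from
    (isClosed_discrete _).preimage ((continuous_apply i).prodMk (continuous_apply j))

theorem isClosed_setOf_isCylIndicator (v : G.V) : IsClosed {f | IsCylIndicator v f} := by
  have : {f | IsCylIndicator v f} = {f | f (FinPath.ofVertex G v) = true} ∩
      (⋂ (μ) (ν), {f | f μ = true → μ.Extends ν → f ν = true}) ∩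
      ⋂ (μ) (ν), {f | f μ = true → f ν = true → μ.Extends ν ∨ ν.Extends μ} := by
    ext f
    simp only [Set.mem_inter_iff, Set.mem_iInter, Set.mem_ofPred_eq]
    exact ⟨fun ⟨h₁, h₂, h₃⟩ => ⟨⟨h₁, h₂⟩, h₃⟩, fun ⟨⟨h₁, h₂⟩, h₃⟩ => ⟨h₁, h₂, h₃⟩⟩
  rw [this]
  refine .inter (.inter ?_ ?_) ?_
  · exact isClosed_eq (continuous_apply _) continuous_const
  · exact isClosed_iInter fun μ => isClosed_iInter fun ν =>
      isClosed_setOf_apply_apply (fun a b => a = true → μ.Extends ν → b = true) μ ν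
  · exact isClosed_iInter fun μ => isClosed_iInter fun ν =>
      isClosed_setOf_apply_apply (fun a b => a = true → b = true → μ.Extends ν ∨ ν.Extends μ) μ ν

theorem isCylIndicator_alphaMap {v : G.V} {w : PathSpace G}
    (hw : w ∈ Cyl (FinPath.ofVertex G v)) : IsCylIndicator v (alphaMap G w) := by
  refine ⟨alphaMap_eq_true_iff.mpr hw, fun μ ν hμ hμν => ?_, fun μ ν hμ hν => ?_⟩
  · exact alphaMap_eq_true_iff.mpr (mem_cyl_of_extends (alphaMap_eq_true_iff.mp hμ) hμν)
  · exact extends_or_extends_of_mem_cyl (alphaMap_eq_true_iff.mp hμ) (alphaMap_eq_true_iff.mp hν)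

namespace IsCylIndicator

variable {v : G.V} {f : FinPath G → Bool}

theorem vtx_eq (hf : IsCylIndicator v f) {μ : FinPath G} (hμ : f μ = true) : μ.vtx = v :=
  (hf.extends_or_extends μ _ hμ hf.apply_ofVertex).elim (·.1) (·.1.symm)

theorem getElem_eq (hf : IsCylIndicator v f) {μ ν : FinPath G} (hμ : f μ = true)
    (hν : f ν = true) {i : ℕ} (hiμ : i < μ.edges.length) (hiν : i < ν.edges.length) :
    μ.edges[i] = ν.edges[i] := by
  rcases hf.extends_or_extends μ ν hμ hν with h | h
  · exact (h.2.getElem hiν).symm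
  · exact h.2.getElem hiμ

theorem eq_alphaMap_inl (hf : IsCylIndicator v f) {lam : FinPath G} (hlam : f lam = true)
    (hmax : ∀ μ, f μ = true → μ.edges.length ≤ lam.edges.length) :
    alphaMap G (.inl lam) = f := by
  funext μ
  rw [Bool.eq_iff_iff, alphaMap_eq_true_iff]
  refine ⟨hf.apply_of_extends lam μ hlam, fun hμ => ?_⟩
  rcases hf.extends_or_extends lam μ hlam hμ with h | h
  · exact h
  · exact h.eq_of_length_le (hmax μ hμ) ▸ FinPath.Extends.refl μ

/-- The `n`-th edge of the infinite path is read off any path of the chain longer than `n`. -/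
theorem exists_alphaMap_inr_eq (hf : IsCylIndicator v f)
    (hlong : ∀ n, ∃ μ, f μ = true ∧ n < μ.edges.length) :
    ∃ x : InfPath G, alphaMap G (.inr x) = f := by
  choose p hp hlen using hlong
  let x : InfPath G :=
    { edge := fun n => (p n).edges[n]'(hlen n)
      chain := fun n => by
        rw [hf.getElem_eq (hp n) (hp (n + 1)) (hlen n) (by have := hlen (n + 1); omega)]
        exact List.isChain_iff_getElem.mp (p (n + 1)).chain n (hlen (n + 1)) }
  have hx : ∀ μ, f μ = true → x.Extends μ := fun μ hμ =>
    ⟨fun _ => by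
      rw [InfPath.range, FinPath.r_getElem_zero, hf.vtx_eq (hp 0), hf.vtx_eq hμ],
     fun i hi => hf.getElem_eq (hp i) hμ (hlen i) hi⟩
  refine ⟨x, funext fun μ => ?_⟩
  rw [Bool.eq_iff_iff, alphaMap_eq_true_iff]
  refine ⟨fun (hμ : x.Extends μ) => ?_, hx μ⟩
  have hρ := hx _ (hp μ.edges.length)
  refine hf.apply_of_extends _ μ (hp μ.edges.length) ⟨hρ.range_eq.symm.trans hμ.range_eq, ?_⟩
  exact hρ.prefix_of_length_le hμ (hlen _).le

theorem mem_range_alphaMap (hf : IsCylIndicator v f) : f ∈ Set.range (alphaMap G) := by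
  let lengths : Set ℕ := {n | ∃ μ, f μ = true ∧ μ.edges.length = n}
  by_cases hbdd : BddAbove lengths
  · obtain ⟨lam, hlam, hlen⟩ := Nat.sSup_mem (s := lengths) ⟨0, _, hf.apply_ofVertex, rfl⟩ hbdd
    refine ⟨.inl lam, hf.eq_alphaMap_inl hlam fun μ hμ => ?_⟩
    exact hlen ▸ le_csSup hbdd ⟨μ, hμ, rfl⟩
  · obtain ⟨x, hx⟩ := hf.exists_alphaMap_inr_eq fun n => by
      obtain ⟨_, ⟨μ, hμ, rfl⟩, hn⟩ := not_bddAbove_iff.mp hbdd n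
      exact ⟨μ, hμ, hn⟩
    exact ⟨.inr x, hx⟩

end IsCylIndicator

theorem alphaMap_image_cyl_ofVertex (G : DirectedGraph) (v : G.V) :
    alphaMap G '' Cyl (FinPath.ofVertex G v) = {f | IsCylIndicator v f} := by
  refine Set.Subset.antisymm (fun _ ⟨w, hw, hf⟩ => hf ▸ isCylIndicator_alphaMap hw) fun f hf => ?_
  obtain ⟨w, rfl⟩ := hf.mem_range_alphaMap
  exact ⟨w, alphaMap_eq_true_iff.mp hf.apply_ofVertex, rfl⟩

end DirectedGraph

open DirectedGraph in
/-- alpha(Z(v)) is closed in the product space {0,1}^{E*}, and consequently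
Z(v) is compact in the initial topology induced by alpha. -/
theorem alphaMap_image_cyl_vertex_closed (G : DirectedGraph) (v : G.V) :
    IsClosed (alphaMap G '' Cyl (FinPath.ofVertex G v)) ∧
    @IsCompact (PathSpace G) (TopologicalSpace.induced (alphaMap G) inferInstance)
      (Cyl (FinPath.ofVertex G v)) := by
  have hclosed : IsClosed (alphaMap G '' Cyl (FinPath.ofVertex G v)) :=
    alphaMap_image_cyl_ofVertex G v ▸ isClosed_setOf_isCylIndicator v
  let _ : TopologicalSpace (PathSpace G) := .induced (alphaMap G) inferInstance
  exact ⟨hclosed, (Topology.IsInducing.induced (alphaMap G)).isCompact_iff.mpr hclosed.isCompact⟩
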